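/- Let a be an element of the split-octonion algebra O over a field F, set α = tr(a) and β = −n(a), and let f(y) = α_n yⁿ + ⋯ + α_1 y ∈ F[y] be a nonzero polynomial without constant term. Then f(a) = f̂(α,β)·a + f̌(α,β)·β·1, where f(a) = α_n aⁿ + ⋯ + α_1 a. -/
import Mathlib


@[ext]
structure Zorn (F : Type*) where
  x1 : F
  u : Fin 3 → F
  v : Fin 3 → F
  x2 : F

namespace Zorn

variable {F : Type*} [Field F]

/-- Dot product on `F³`. -/
def dot (x y : Fin 3 → F) : F := x 0 * y 0 + x 1 * y 1 + x 2 * y 2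

/-- Cross product on `F³`. -/
def cross (x y : Fin 3 → F) : Fin 3 → F :=
  ![x 1 * y 2 - x 2 * y 1, x 2 * y 0 - x 0 * y 2, x 0 * y 1 - x 1 * y 0]

instance : Add (Zorn F) :=
  ⟨fun a b => ⟨a.x1 + b.x1, a.u + b.u, a.v + b.v, a.x2 + b.x2⟩⟩

instance : Zero (Zorn F) := ⟨⟨0, 0, 0, 0⟩⟩

instance : Neg (Zorn F) := ⟨fun a => ⟨-a.x1, -a.u, -a.v, -a.x2⟩⟩

instance : Sub (Zorn F) :=
  ⟨fun a b => ⟨a.x1 - b.x1, a.u - b.u, a.v - b.v, a.x2 - b.x2⟩⟩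

instance : SMul F (Zorn F) :=
  ⟨fun c a => ⟨c * a.x1, c • a.u, c • a.v, c * a.x2⟩⟩

/-- Zorn vector-matrix multiplication. -/
instance : Mul (Zorn F) :=
  ⟨fun a b =>
    ⟨a.x1 * b.x1 + dot a.u b.v,
     a.x1 • b.u + b.x2 • a.u - cross a.v b.v,
     b.x1 • a.v + a.x2 • b.v + cross a.u b.u,
     a.x2 * b.x2 + dot a.v b.u⟩⟩

instance : One (Zorn F) := ⟨⟨1, 0, 0, 1⟩⟩

@[simp] lemma add_def (a b : Zorn F) :
    a + b = ⟨a.x1 + b.x1, a.u + b.u, a.v + b.v, a.x2 + b.x2⟩ := rfl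
@[simp] lemma zero_def : (0 : Zorn F) = ⟨0, 0, 0, 0⟩ := rfl
@[simp] lemma neg_def (a : Zorn F) : -a = ⟨-a.x1, -a.u, -a.v, -a.x2⟩ := rfl
@[simp] lemma sub_def (a b : Zorn F) :
    a - b = ⟨a.x1 - b.x1, a.u - b.u, a.v - b.v, a.x2 - b.x2⟩ := rfl
@[simp] lemma smul_def (c : F) (a : Zorn F) :
    c • a = ⟨c * a.x1, c • a.u, c • a.v, c * a.x2⟩ := rfl

instance : AddCommGroup (Zorn F) where
  add_assoc a b c := by ext <;> simp [add_assoc]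
  zero_add a := by ext <;> simp
  add_zero a := by ext <;> simp
  add_comm a b := by ext <;> simp [add_comm]
  neg_add_cancel a := by ext <;> simp
  sub_eq_add_neg a b := by ext <;> simp [sub_eq_add_neg]
  nsmul := nsmulRec
  zsmul := zsmulRec

instance : Module F (Zorn F) where
  one_smul a := by ext <;> simp
  mul_smul c d a := by ext <;> simp [mul_assoc, mul_smul]
  smul_zero c := by ext <;> simp
  smul_add c a b := by ext <;> simp [mul_add]
  add_smul c d a := by ext <;> simp [add_mul, add_smul]
  zero_smul a := by ext <;> simp

/-- The trace of a split octonion. -/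
def trace (a : Zorn F) : F := a.x1 + a.x2

/-- The norm of a split octonion. -/
def norm (a : Zorn F) : F := a.x1 * a.x2 - dot a.u a.v

/-- The conjugate of a split octonion. -/
def conj (a : Zorn F) : Zorn F := ⟨a.x2, -a.u, -a.v, a.x1⟩

end Zorn

namespace Zorn

variable {F : Type*} [Field F]

/-- Iterated powers of a split octonion (well defined by power-associativity). -/
def pow (a : Zorn F) : ℕ → Zorn F
  | 0 => 1
  | n + 1 => a * pow a n

/-- `P y z n` is the generalized Fibonacci polynomial `p_{n-1}(y,z)`:
`p_{-1} = 0`, `p_0 = 1`, `p_{k+1} = y p_k + z p_{k-1}`. -/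
def P (y z : F) : ℕ → F
  | 0 => 0
  | 1 => 1
  | n + 2 => y * P y z (n + 1) + z * P y z n

/-- `f̂(y,z) = Σ_{k=1}^n α_k p_{k-1}(y,z)`. -/
def fHat (n : ℕ) (α : ℕ → F) (y z : F) : F := ∑ k ∈ Finset.Icc 1 n, α k * P y z k

/-- `f̌(y,z) = Σ_{k=1}^n α_k p_{k-2}(y,z)`. -/
def fCheck (n : ℕ) (α : ℕ → F) (y z : F) : F := ∑ k ∈ Finset.Icc 1 n, α k * P y z (k - 1)

/-- `f(x) = Σ_{k=1}^n α_k x^k` for `x` in the split octonions. -/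
def fOct (n : ℕ) (α : ℕ → F) (x : Zorn F) : Zorn F := ∑ k ∈ Finset.Icc 1 n, α k • pow x k

/-- `f(ν) = Σ_{k=1}^n α_k ν^k` for `ν ∈ F`. -/
def fScalar (n : ℕ) (α : ℕ → F) (y : F) : F := ∑ k ∈ Finset.Icc 1 n, α k * y ^ k

/-- `g : O → O` is an `F`-algebra automorphism of the split octonions. -/
def IsAlgAut (g : Zorn F → Zorn F) : Prop :=
  Function.Bijective g ∧ (∀ a b, g (a + b) = g a + g b) ∧
    (∀ (c : F) (a : Zorn F), g (c • a) = c • g a) ∧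
    (∀ a b, g (a * b) = g a * g b) ∧ g 1 = 1

/-- The `Aut(O)`-orbit of a split octonion. -/
def orbit (a : Zorn F) : Set (Zorn F) := {x | ∃ g, IsAlgAut g ∧ g a = x}

/-- The canonical octonion `c(α,β)`. -/
def cmat (α β : F) : Zorn F := ⟨α, ![β, 0, 0], ![1, 0, 0], 0⟩

end Zorn

namespace Zorn

variable {F : Type*} [Field F]

@[simp] lemma mul_def' (a b : Zorn F) :
    a * b = ⟨a.x1 * b.x1 + dot a.u b.v,
     a.x1 • b.u + b.x2 • a.u - cross a.v b.v,
     b.x1 • a.v + a.x2 • b.v + cross a.u b.u,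
     a.x2 * b.x2 + dot a.v b.u⟩ := rfl

@[simp] lemma one_def : (1 : Zorn F) = ⟨1, 0, 0, 1⟩ := rfl

lemma mul_one' (a : Zorn F) : a * 1 = a := by
  ext <;> simp [dot, cross, Matrix.vecHead, Matrix.vecTail, Pi.smul_apply, smul_eq_mul, Function.comp] <;> (try rename_i i; fin_cases i) <;> simp

lemma mul_smul' (c : F) (a b : Zorn F) : a * (c • b) = c • (a * b) := by
  ext <;> simp [dot, cross, Matrix.vecHead, Matrix.vecTail, Pi.smul_apply, smul_eq_mul, Function.comp] <;> (try rename_i i; fin_cases i) <;> (try simp) <;> ring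

lemma mul_add' (a b c : Zorn F) : a * (b + c) = a * b + a * c := by
  ext <;> simp [dot, cross, Matrix.vecHead, Matrix.vecTail, Pi.smul_apply, smul_eq_mul, Function.comp] <;> (try rename_i i; fin_cases i) <;> (try simp) <;> ring

lemma sq_eq (a : Zorn F) : a * a = trace a • a + (-norm a) • 1 := by
  ext <;> simp [dot, cross, trace, norm, Matrix.vecHead, Matrix.vecTail, Pi.smul_apply, smul_eq_mul, Function.comp] <;> (try rename_i i; fin_cases i) <;>
    (try simp) <;> ring

lemma pow_succ_eq (a : Zorn F) (k : ℕ) :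
    pow a (k + 1) = P (trace a) (-norm a) (k + 1) • a +
      ((-norm a) * P (trace a) (-norm a) k) • (1 : Zorn F) := by
  induction k with
  | zero => show a * 1 = _; rw [mul_one']; ext <;> simp [P]
  | succ m ih =>
    show a * pow a (m + 1) = _
    rw [ih, mul_add', mul_smul', mul_smul', sq_eq, mul_one']
    rw [show P (trace a) (-norm a) (m + 2) =
      trace a * P (trace a) (-norm a) (m + 1) + (-norm a) * P (trace a) (-norm a) m from rfl]
    simp only [smul_add, smul_smul]
    module

lemma pow_eq (a : Zorn F) (k : ℕ) (hk : 1 ≤ k) :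
    pow a k = P (trace a) (-norm a) k • a +
      ((-norm a) * P (trace a) (-norm a) (k - 1)) • (1 : Zorn F) := by
  obtain ⟨m, rfl⟩ := Nat.exists_eq_add_of_le hk
  rw [Nat.add_comm 1 m]
  simpa using pow_succ_eq a m

end Zorn

/-- with `α = tr(a)`, `β = −n(a)`, for a nonzero polynomial
`f(y) = α_n yⁿ + ⋯ + α_1 y` without constant term one has
`f(a) = f̂(α,β)·a + f̌(α,β)·β·1`. -/
theorem zorn_polynomial_formula {F : Type*} [Field F] (n : ℕ) (hn : 1 ≤ n) (α : ℕ → F)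
    (hα : α n ≠ 0) (a : Zorn F) :
    Zorn.fOct n α a =
      Zorn.fHat n α (Zorn.trace a) (-Zorn.norm a) • a +
        (Zorn.fCheck n α (Zorn.trace a) (-Zorn.norm a) * (-Zorn.norm a)) • (1 : Zorn F) := by
  unfold Zorn.fOct Zorn.fHat Zorn.fCheck
  rw [Finset.sum_smul, Finset.sum_mul, Finset.sum_smul, ← Finset.sum_add_distrib]
  refine Finset.sum_congr rfl fun k hk => ?_
  rw [Zorn.pow_eq a k (Finset.mem_Icc.mp hk).1]
  simp only [smul_add, smul_smul]
  ring_nf
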